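/- arXiv:1605.07047 — 2 statements merged into one kernel-verified Lean document; each statement's English description precedes it below -/
import Mathlib

section
/- Define f : closed unit disk → closed unit disk by f(z) = (e² z)/(e²|z| - |z| + 1) · e^{2πi ξ(|z|/(1-|z|))} for 0 < |z| < 1 and f(z) = z for |z| = 0 or |z| = 1. Then f is a homeomorphism of the closed unit disk. -/
/-!
The map is radial, `f z = c (‖z‖) * z`, where `c s` has modulus `e² / ((e² - 1) s + 1)` and
argument `2π ξ(s / (1 - s))`. The modulus makes `s ↦ s ‖c s‖` a bijection of `[0, 1]`, so `f` is a
continuous bijection of the compact disk, hence a homeomorphism. The delicate point is continuity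
of the twist at the boundary circle: in logarithmic scale `ξ` is a tent wave of period `2` divided
by the dyadic factor `2 ^ ⌊log₂ (n + 1)⌋` on `[2n, 2n + 2)`; this factor only jumps where the tent
vanishes, so `ξ` is continuous, and it grows, so `ξ` tends to `0` at infinity.
-/

/-- The function ξ from the paper. -/
noncomputable def xi (r : ℝ) : ℝ :=
  if r ≤ 1 then 0
  else
    if Even ⌊Real.log r⌋ then
      (Real.log r - (⌊Real.log r⌋ : ℝ)) /
        (2 : ℝ) ^ (⌊Real.logb 2 (((⌊Real.log r / 2⌋ + 1 : ℤ) : ℝ))⌋)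
    else
      (1 - (Real.log r - (⌊Real.log r⌋ : ℝ))) /
        (2 : ℝ) ^ (⌊Real.logb 2 (((⌊Real.log r / 2⌋ + 1 : ℤ) : ℝ))⌋)

/-- The map f from the paper, as a map of ℂ (it preserves the closed unit disk). -/
noncomputable def fMap (z : ℂ) : ℂ :=
  if ‖z‖ = 0 ∨ ‖z‖ = 1 then z
  else (Real.exp 2 : ℂ) * z / ((Real.exp 2 * ‖z‖ - ‖z‖ + 1 : ℝ) : ℂ) *
    Complex.exp (2 * Real.pi * Complex.I * xi (‖z‖ / (1 - ‖z‖)))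

open Filter Set Topology Real

theorem continuous_mul_comp_floor {R : Type*} [NonUnitalSeminormedRing R] {f : ℝ → R}
    (hf : Continuous f) (hf₀ : ∀ n : ℤ, f n = 0) {k : ℤ → R} {C : ℝ} (hk : ∀ n, ‖k n‖ ≤ C) :
    Continuous fun x => f x * k ⌊x⌋ := by
  refine continuous_iff_continuousAt.2 fun x => ?_
  by_cases hx : Int.fract x = 0
  · obtain ⟨n, rfl⟩ : ∃ n : ℤ, (n : ℝ) = x := Int.fract_eq_zero_iff.1 hx
    have hf_tendsto : Tendsto f (𝓝 (n : ℝ)) (𝓝 0) := hf₀ n ▸ hf.tendsto _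
    simpa only [ContinuousAt, hf₀ n, zero_mul] using
      hf_tendsto.zero_mul_isBoundedUnder_le ⟨C, eventually_map.2 (.of_forall fun y => hk ⌊y⌋)⟩
  · have hx_mem : x ∈ Ioo (⌊x⌋ : ℝ) (⌊x⌋ + 1) :=
      ⟨(Int.floor_le x).lt_of_ne fun h => hx (by rw [← h, Int.fract_intCast]),
        Int.lt_floor_add_one x⟩
    have hfloor : (fun y : ℝ => ⌊y⌋) =ᶠ[𝓝 x] fun _ => ⌊x⌋ := by
      filter_upwards [isOpen_Ioo.mem_nhds hx_mem] with y hy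
      exact Int.floor_eq_iff.2 ⟨hy.1.le, hy.2⟩
    refine (hf.continuousAt.mul (continuousAt_const (y := k ⌊x⌋))).congr ?_
    filter_upwards [hfloor] with y hy
    simp only [Pi.mul_apply, hy]

noncomputable def tent (x : ℝ) : ℝ := 1 - |2 * Int.fract x - 1|

theorem continuous_tent : Continuous tent :=
  ContinuousOn.comp_fract'' (f := fun y : ℝ => 1 - |2 * y - 1|) (by fun_prop) (by norm_num)

theorem tent_intCast (n : ℤ) : tent n = 0 := by
  norm_num [tent]

theorem abs_tent_le_one (x : ℝ) : |tent x| ≤ 1 := by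
  have h : |2 * Int.fract x - 1| ≤ 1 :=
    abs_le.2 ⟨by linarith [Int.fract_nonneg x], by linarith [Int.fract_lt_one x]⟩
  rw [tent, abs_le]
  constructor <;> linarith [abs_nonneg (2 * Int.fract x - 1)]

theorem tent_half (t : ℝ) :
    tent (t / 2) = if Even ⌊t⌋ then Int.fract t else 1 - Int.fract t := by
  set m := ⌊t / 2⌋
  have h₀ := Int.floor_le (t / 2)
  have h₁ := Int.lt_floor_add_one (t / 2)
  rcases lt_or_ge (t / 2 - m) (1 / 2) with h | h
  · have hfloor : ⌊t⌋ = 2 * m :=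
      Int.floor_eq_iff.2 ⟨by push_cast; linarith, by push_cast; linarith⟩
    rw [if_pos ⟨m, by omega⟩, tent, Int.fract, Int.fract, hfloor, abs_of_neg (by linarith)]
    push_cast; ring
  · have hfloor : ⌊t⌋ = 2 * m + 1 :=
      Int.floor_eq_iff.2 ⟨by push_cast; linarith, by push_cast; linarith⟩
    rw [if_neg (by rw [hfloor, Int.not_even_iff_odd]; exact odd_two_mul_add_one m), tent,
      Int.fract, Int.fract, hfloor, abs_of_nonneg (by linarith)]
    push_cast; ring

noncomputable def dyadicFloor (x : ℝ) : ℝ := 2 ^ ⌊logb 2 x⌋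

theorem one_le_dyadicFloor_intCast (n : ℤ) : 1 ≤ dyadicFloor n := by
  have hlog : 0 ≤ logb 2 (n : ℝ) := by
    rcases eq_or_ne n 0 with rfl | hn
    · simp
    · rw [← logb_abs, ← Int.cast_abs]
      exact logb_nonneg one_lt_two (by exact_mod_cast Int.one_le_abs hn)
  exact one_le_zpow₀ one_le_two (Int.floor_nonneg.2 hlog)

theorem half_le_dyadicFloor {x : ℝ} (hx : 0 < x) : x / 2 ≤ dyadicFloor x := by
  have h : (2 : ℝ) ^ (logb 2 x - 1) ≤ (2 : ℝ) ^ (⌊logb 2 x⌋ : ℝ) :=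
    rpow_le_rpow_of_exponent_le one_le_two (by linarith [Int.sub_one_lt_floor (logb 2 x)])
  rwa [rpow_sub two_pos, rpow_logb two_pos (by norm_num) hx, rpow_one, rpow_intCast] at h

theorem tendsto_dyadicFloor_atTop : Tendsto dyadicFloor atTop atTop :=
  tendsto_atTop_mono' _ ((eventually_gt_atTop 0).mono fun _ => half_le_dyadicFloor)
    (tendsto_id.atTop_div_const two_pos)

noncomputable def xiProfile (t : ℝ) : ℝ := tent (t / 2) / dyadicFloor (⌊t / 2⌋ + 1 : ℤ)

theorem xiProfile_eq_comp :
    xiProfile = (fun x => tent x * (dyadicFloor (⌊x⌋ + 1 : ℤ))⁻¹) ∘ (· / 2) :=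
  funext fun _ => div_eq_mul_inv _ _

theorem continuous_xiProfile : Continuous xiProfile := by
  refine xiProfile_eq_comp ▸ .comp ?_ (continuous_id.div_const 2)
  refine continuous_mul_comp_floor continuous_tent tent_intCast
    (k := fun n => (dyadicFloor (n + 1 : ℤ))⁻¹) (C := 1) fun n => ?_
  rw [norm_inv, Real.norm_of_nonneg (zero_le_one.trans (one_le_dyadicFloor_intCast _))]
  exact inv_le_one_of_one_le₀ (one_le_dyadicFloor_intCast _)

theorem tendsto_xiProfile_atTop : Tendsto xiProfile atTop (𝓝 0) := by
  refine xiProfile_eq_comp ▸ .comp ?_ (tendsto_id.atTop_div_const two_pos)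
  have hscale : Tendsto (fun x : ℝ => dyadicFloor (⌊x⌋ + 1 : ℤ)) atTop atTop :=
    tendsto_dyadicFloor_atTop.comp <| tendsto_intCast_atTop_atTop.comp <|
      tendsto_atTop_add_const_right _ 1 tendsto_floor_atTop
  exact isBoundedUnder_le_mul_tendsto_zero
    ⟨1, eventually_map.2 (.of_forall fun x => abs_tent_le_one x)⟩
    (tendsto_inv_atTop_zero.comp hscale)

theorem xi_eq_xiProfile_log (r : ℝ) : xi r = xiProfile (log (max r 1)) := by
  rcases le_or_gt r 1 with hr | hr
  · simp [xi, hr, xiProfile, tent]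
  · rw [xi, if_neg hr.not_ge, max_eq_left hr.le, xiProfile, tent_half, ← Int.self_sub_floor]
    split_ifs <;> rfl

theorem continuous_xi : Continuous xi := by
  simp only [funext xi_eq_xiProfile_log]
  exact continuous_xiProfile.comp <|
    (continuous_id.max continuous_const).log fun r => by positivity

theorem tendsto_xi_atTop : Tendsto xi atTop (𝓝 0) := by
  simp only [funext xi_eq_xiProfile_log]
  exact tendsto_xiProfile_atTop.comp <| tendsto_log_atTop.comp <|
    tendsto_atTop_mono (le_max_left · 1) tendsto_id

/-- At `s = 1` this reads `g (1 / 0) = g 0`, so continuity there is the limit hypothesis. -/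
theorem continuousOn_comp_div_one_sub {X : Type*} [TopologicalSpace X] {g : ℝ → X}
    (hg : Continuous g) (hlim : Tendsto g atTop (𝓝 (g 0))) :
    ContinuousOn (fun s => g (s / (1 - s))) (Iic 1) := by
  intro s hs
  rcases (show s ≤ 1 from hs).lt_or_eq with hs | rfl
  · exact (hg.continuousAt.comp
      (continuousAt_id.div (by fun_prop) (sub_ne_zero.2 hs.ne'))).continuousWithinAt
  · rw [← continuousWithinAt_Iio_iff_Iic, ContinuousWithinAt, sub_self, div_zero]
    have hgap : Tendsto (fun s : ℝ => 1 - s) (𝓝[<] 1) (𝓝[>] 0) :=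
      tendsto_nhdsWithin_iff.2
        ⟨((continuous_const.sub continuous_id).tendsto' 1 0 (sub_self 1)).mono_left
          nhdsWithin_le_nhds, eventually_nhdsWithin_of_forall fun _ hs => sub_pos.2 (mem_Iio.1 hs)⟩
    exact hlim.comp <| (tendsto_nhdsWithin_of_tendsto_nhds tendsto_id).pos_mul_atTop one_pos
      (tendsto_inv_nhdsGT_zero.comp hgap)

theorem exists_homeomorph_smul_norm {𝕜 E : Type*} [NormedField 𝕜] [NormedAddCommGroup E]
    [NormedSpace 𝕜 E] [ProperSpace E] {c : ℝ → 𝕜} (hc : ContinuousOn c (Icc 0 1))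
    (hc₀ : ∀ s ∈ Icc (0 : ℝ) 1, c s ≠ 0)
    (hbij : BijOn (fun s => s * ‖c s‖) (Icc 0 1) (Icc 0 1)) :
    ∃ F : {x : E // ‖x‖ ≤ 1} ≃ₜ {x : E // ‖x‖ ≤ 1}, ∀ x, (F x : E) = c ‖(x : E)‖ • (x : E) := by
  have : CompactSpace {x : E // ‖x‖ ≤ 1} :=
    (isCompact_iff_compactSpace (s := {x : E | ‖x‖ ≤ 1})).1 <| by
      simpa only [Metric.closedBall, dist_zero_right] using isCompact_closedBall (0 : E) 1
  have hnorm (x : {x : E // ‖x‖ ≤ 1}) : ‖(x : E)‖ ∈ Icc (0 : ℝ) 1 := ⟨norm_nonneg _, x.2⟩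
  let f (x : {x : E // ‖x‖ ≤ 1}) : {x : E // ‖x‖ ≤ 1} :=
    ⟨c ‖(x : E)‖ • (x : E), by rw [norm_smul, mul_comm]; exact (hbij.mapsTo (hnorm x)).2⟩
  have hcont : Continuous f :=
    ((hc.comp_continuous (continuous_norm.comp continuous_subtype_val) hnorm).smul
      continuous_subtype_val).subtype_mk _
  have hinj : Function.Injective f := by
    intro x y hxy
    have hxy' : c ‖(x : E)‖ • (x : E) = c ‖(y : E)‖ • (y : E) := congrArg Subtype.val hxy
    have hn : ‖(x : E)‖ = ‖(y : E)‖ := hbij.injOn (hnorm x) (hnorm y) <| by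
      simpa only [norm_smul, mul_comm] using congrArg norm hxy'
    rw [hn] at hxy'
    exact Subtype.ext (smul_right_injective E (hc₀ _ (hnorm y)) hxy')
  have hsurj : Function.Surjective f := by
    intro y
    obtain ⟨s, hs, hsy : s * ‖c s‖ = ‖(y : E)‖⟩ := hbij.surjOn (hnorm y)
    have hcs : c s ≠ 0 := hc₀ s hs
    have hx : ‖(c s)⁻¹ • (y : E)‖ = s := by
      rw [norm_smul, norm_inv, ← hsy, mul_comm, mul_inv_cancel_right₀ (norm_ne_zero_iff.2 hcs)]
    refine ⟨⟨(c s)⁻¹ • (y : E), hx.trans_le hs.2⟩, Subtype.ext ?_⟩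
    simp only [f, hx, smul_smul, mul_inv_cancel₀ hcs, one_smul]
  exact ⟨(hcont.isClosedEmbedding hinj).isEmbedding.toHomeomorphOfSurjective hsurj, fun _ => rfl⟩

theorem sub_one_mul_add_one_pos {b s : ℝ} (hb : 0 < b) (hs : s ∈ Icc (0 : ℝ) 1) :
    0 < (b - 1) * s + 1 := by
  nlinarith [mul_nonneg hb.le hs.1, hs.2]

theorem bijOn_mul_div_sub_one_mul_add_one {b : ℝ} (hb : 0 < b) :
    BijOn (fun s => s * (b / ((b - 1) * s + 1))) (Icc 0 1) (Icc 0 1) := by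
  have hcont : ContinuousOn (fun s => s * (b / ((b - 1) * s + 1))) (Icc 0 1) :=
    continuousOn_id.mul <| continuousOn_const.div (by fun_prop) fun s hs =>
      (sub_one_mul_add_one_pos hb hs).ne'
  refine ⟨fun s hs => ?_, fun s hs t ht hst => ?_, ?_⟩
  · have hden := sub_one_mul_add_one_pos hb hs
    refine ⟨mul_nonneg hs.1 (div_nonneg hb.le hden.le), ?_⟩
    dsimp only
    rw [mul_div_assoc', div_le_one hden]
    nlinarith [hs.2]
  · have hs' := sub_one_mul_add_one_pos hb hs
    have ht' := sub_one_mul_add_one_pos hb ht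
    simp only [mul_div_assoc', div_eq_div_iff hs'.ne' ht'.ne'] at hst
    exact mul_left_cancel₀ hb.ne' (by linear_combination hst)
  · simpa [SurjOn, hb.ne'] using intermediate_value_Icc zero_le_one hcont

noncomputable def fMapFactor (s : ℝ) : ℂ :=
  (exp 2 / ((exp 2 - 1) * s + 1) : ℝ) * Complex.exp ((2 * π * xi (s / (1 - s)) : ℝ) * Complex.I)

theorem norm_fMapFactor {s : ℝ} (hs : s ∈ Icc (0 : ℝ) 1) :
    ‖fMapFactor s‖ = exp 2 / ((exp 2 - 1) * s + 1) := by
  rw [fMapFactor, norm_mul, Complex.norm_exp_ofReal_mul_I, mul_one, Complex.norm_real,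
    Real.norm_of_nonneg (div_nonneg (exp_pos 2).le (sub_one_mul_add_one_pos (exp_pos 2) hs).le)]

theorem continuousOn_fMapFactor : ContinuousOn fMapFactor (Icc 0 1) := by
  have hphase : ContinuousOn (fun s => xi (s / (1 - s))) (Icc 0 1) :=
    (continuousOn_comp_div_one_sub continuous_xi (by simpa [xi] using tendsto_xi_atTop)).mono
      Icc_subset_Iic_self
  refine .mul (Complex.continuous_ofReal.comp_continuousOn ?_) ?_
  · exact continuousOn_const.div (by fun_prop) fun s hs =>
      (sub_one_mul_add_one_pos (exp_pos 2) hs).ne'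
  · exact Complex.continuous_exp.comp_continuousOn <|
      (Complex.continuous_ofReal.comp_continuousOn (continuousOn_const.mul hphase)).mul
        continuousOn_const

theorem fMap_eq_fMapFactor_mul {z : ℂ} (hz : ‖z‖ ≤ 1) : fMap z = fMapFactor ‖z‖ * z := by
  rw [fMap]
  split_ifs with h
  · rcases h with h | h
    · simp [norm_eq_zero.1 h]
    · simp [fMapFactor, h, xi]
  · have hden : (exp 2 - 1) * ‖z‖ + 1 ≠ 0 :=
      (sub_one_mul_add_one_pos (exp_pos 2) ⟨norm_nonneg z, hz⟩).ne'
    rw [fMapFactor, show exp 2 * ‖z‖ - ‖z‖ + 1 = (exp 2 - 1) * ‖z‖ + 1 by ring]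
    push_cast
    field_simp

theorem fMap_homeomorph_closedDisk :
    ∃ F : Homeomorph {z : ℂ // ‖z‖ ≤ 1} {z : ℂ // ‖z‖ ≤ 1},
      ∀ z : {z : ℂ // ‖z‖ ≤ 1}, (F z : ℂ) = fMap (z : ℂ) := by
  have hbij : BijOn (fun s => s * ‖fMapFactor s‖) (Icc 0 1) (Icc 0 1) :=
    (bijOn_mul_div_sub_one_mul_add_one (exp_pos 2)).congr fun s hs => by
      simp only [norm_fMapFactor hs]
  have hne : ∀ s ∈ Icc (0 : ℝ) 1, fMapFactor s ≠ 0 := fun s hs =>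
    norm_ne_zero_iff.1 <| by
      rw [norm_fMapFactor hs]
      exact (div_pos (exp_pos 2) (sub_one_mul_add_one_pos (exp_pos 2) hs)).ne'
  obtain ⟨F, hF⟩ := exists_homeomorph_smul_norm (E := ℂ) continuousOn_fMapFactor hne hbij
  exact ⟨F, fun z => by rw [hF, smul_eq_mul, fMap_eq_fMapFactor_mul z.2]⟩
end

section
/- For f as defined on the closed unit disk and any real z ∈ (1/2, e/(1+e)), for every natural number n, f^{2ⁿ-1}(z) = (e^{2(2ⁿ-1)} z)/(e^{2(2ⁿ-1)} z - z + 1) · e^{2πi n ln(z/(1-z))}. -/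
open Complex (I)

/-- The conjugate of `s ↦ exp t * s` under the homeomorphism `r ↦ r / (1 - r)` of `(0, 1)`
onto `(0, ∞)`. -/
noncomputable def radialFlow (t r : ℝ) : ℝ :=
  Real.exp t * r / (Real.exp t * r - r + 1)

lemma radialFlow_denom_pos {r : ℝ} (hr0 : 0 < r) (hr1 : r < 1) (t : ℝ) :
    0 < Real.exp t * r - r + 1 := by
  nlinarith [mul_pos (Real.exp_pos t) hr0]

lemma radialFlow_pos {r : ℝ} (hr0 : 0 < r) (hr1 : r < 1) (t : ℝ) : 0 < radialFlow t r :=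
  div_pos (by positivity) (radialFlow_denom_pos hr0 hr1 t)

lemma radialFlow_lt_one {r : ℝ} (hr0 : 0 < r) (hr1 : r < 1) (t : ℝ) : radialFlow t r < 1 := by
  rw [radialFlow, div_lt_one (radialFlow_denom_pos hr0 hr1 t)]
  linarith

lemma radialFlow_div_one_sub {r : ℝ} (hr0 : 0 < r) (hr1 : r < 1) (t : ℝ) :
    radialFlow t r / (1 - radialFlow t r) = Real.exp t * (r / (1 - r)) := by
  have hD := (radialFlow_denom_pos hr0 hr1 t).ne'
  have h1 : 1 - radialFlow t r = (1 - r) / (Real.exp t * r - r + 1) := by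
    rw [radialFlow, eq_div_iff hD, sub_mul, div_mul_cancel₀ _ hD]; ring
  rw [h1, radialFlow, div_div_div_cancel_right₀ hD, mul_div_assoc]

lemma radialFlow_add {r : ℝ} (hr0 : 0 < r) (hr1 : r < 1) (a b : ℝ) :
    radialFlow a (radialFlow b r) = radialFlow (a + b) r := by
  have hD := (radialFlow_denom_pos hr0 hr1 b).ne'
  have h : Real.exp a * radialFlow b r - radialFlow b r + 1 =
      (Real.exp (a + b) * r - r + 1) / (Real.exp b * r - r + 1) := by
    rw [eq_div_iff hD, add_mul, sub_mul, mul_assoc, radialFlow, div_mul_cancel₀ _ hD,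
      Real.exp_add]
    ring
  rw [radialFlow, h, radialFlow, mul_div_assoc', div_div_div_cancel_right₀ hD, radialFlow,
    Real.exp_add, mul_assoc]

lemma radialFlow_zero (r : ℝ) : radialFlow 0 r = r := by
  simp [radialFlow]

lemma fMap_ofReal_mul {r : ℝ} (hr0 : 0 < r) (hr1 : r < 1) {u : ℂ} (hu : ‖u‖ = 1) :
    fMap (r * u) = radialFlow 2 r * (u * Complex.exp (2 * Real.pi * I * xi (r / (1 - r)))) := by
  have hnorm : ‖(r : ℂ) * u‖ = r := by
    rw [norm_mul, hu, mul_one, Complex.norm_real, Real.norm_of_nonneg hr0.le]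
  rw [fMap, if_neg (by rw [hnorm]; exact not_or.mpr ⟨hr0.ne', hr1.ne⟩), hnorm, radialFlow]
  push_cast
  ring

lemma xi_exp_two_mul_add {t : ℝ} (ht0 : 0 < t) (ht1 : t < 1) (m : ℕ) :
    xi (Real.exp (2 * m + t)) = t / 2 ^ Nat.log 2 (m + 1) := by
  have hfloor : ⌊2 * (m : ℝ) + t⌋ = 2 * m := by
    rw [Int.floor_eq_iff]; push_cast; constructor <;> linarith
  have hfloor_half : ⌊(2 * (m : ℝ) + t) / 2⌋ = m := by
    rw [Int.floor_eq_iff]; push_cast; constructor <;> linarith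
  have hlogb : ⌊Real.logb 2 (((m : ℤ) + 1 : ℤ) : ℝ)⌋ = Nat.log 2 (m + 1) := by
    rw [show (((m : ℤ) + 1 : ℤ) : ℝ) = ((m + 1 : ℕ) : ℝ) by push_cast; rfl,
      show (2 : ℝ) = ((2 : ℕ) : ℝ) by norm_num, Real.floor_logb_natCast (Nat.cast_nonneg _),
      Int.log_natCast]
  have hgt : ¬ Real.exp (2 * m + t) ≤ 1 := by
    rw [not_le, Real.one_lt_exp_iff]; positivity
  rw [xi, if_neg hgt, Real.log_exp, hfloor, if_pos (even_two_mul _), hfloor_half, hlogb,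
    zpow_natCast]
  push_cast
  ring

lemma norm_exp_two_pi_I_mul_ofReal (x : ℝ) : ‖Complex.exp (2 * Real.pi * I * x)‖ = 1 := by
  rw [show 2 * Real.pi * I * x = ((2 * Real.pi * x : ℝ) : ℂ) * I by push_cast; ring]
  exact Complex.norm_exp_ofReal_mul_I _

lemma fMap_iterate_ofReal {r : ℝ} (hr0 : 0 < r) (hr1 : r < 1) (m : ℕ) :
    fMap^[m] r = radialFlow (2 * m) r *
      Complex.exp (2 * Real.pi * I *
        ((∑ k ∈ Finset.range m, xi (Real.exp (2 * k) * (r / (1 - r))) : ℝ) : ℂ)) := by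
  induction m with
  | zero => simp [radialFlow_zero]
  | succ m ih =>
    rw [Function.iterate_succ_apply', ih,
      fMap_ofReal_mul (radialFlow_pos hr0 hr1 _) (radialFlow_lt_one hr0 hr1 _)
        (norm_exp_two_pi_I_mul_ofReal _),
      radialFlow_add hr0 hr1, radialFlow_div_one_sub hr0 hr1, Finset.sum_range_succ, mul_assoc,
      ← Complex.exp_add]
    congr 2
    · push_cast; congr 1; ring
    · push_cast; ring

lemma sum_range_two_pow_sub_one_inv_two_pow_log (n : ℕ) :
    ∑ k ∈ Finset.range (2 ^ n - 1), ((2 : ℝ) ^ Nat.log 2 (k + 1))⁻¹ = n := by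
  induction n with
  | zero => simp
  | succ n ih =>
    have h2n : 1 ≤ 2 ^ n := Nat.one_le_two_pow
    have hblock : ∀ k ∈ Finset.Ico (2 ^ n - 1) (2 ^ (n + 1) - 1),
        ((2 : ℝ) ^ Nat.log 2 (k + 1))⁻¹ = ((2 : ℝ) ^ n)⁻¹ := by
      intro k hk
      rw [Finset.mem_Ico, pow_succ] at hk
      rw [Nat.log_eq_of_pow_le_of_lt_pow (m := n) (by omega) (by rw [pow_succ]; omega)]
    rw [← Finset.sum_range_add_sum_Ico _ (by omega : 2 ^ n - 1 ≤ 2 ^ (n + 1) - 1), ih,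
      Finset.sum_congr rfl hblock, Finset.sum_const, Nat.card_Ico,
      show 2 ^ (n + 1) - 1 - (2 ^ n - 1) = 2 ^ n by rw [pow_succ]; omega, nsmul_eq_mul]
    push_cast
    rw [mul_inv_cancel₀ (by positivity)]

theorem fMap_iterate_formula (z : ℝ)
    (hz : z ∈ Set.Ioo (1 / 2 : ℝ) (Real.exp 1 / (1 + Real.exp 1))) (n : ℕ) :
    fMap^[2 ^ n - 1] (z : ℂ) =
      ((Real.exp (2 * (2 ^ n - 1 : ℕ)) * z / (Real.exp (2 * (2 ^ n - 1 : ℕ)) * z - z + 1) : ℝ) : ℂ) *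
        Complex.exp (2 * Real.pi * Complex.I * ((n : ℝ) * Real.log (z / (1 - z)))) := by
  obtain ⟨hz_half, hz_lt⟩ := hz
  have he : 0 < Real.exp 1 := Real.exp_pos 1
  rw [lt_div_iff₀ (by positivity)] at hz_lt
  have hz0 : 0 < z := by linarith
  have hz1 : z < 1 := by nlinarith
  set s := z / (1 - z) with hs
  have hs1 : 1 < s := by rw [hs, lt_div_iff₀ (by linarith)]; linarith
  have hse : s < Real.exp 1 := by rw [hs, div_lt_iff₀ (by linarith)]; linarith
  have hs0 : 0 < s := by linarith
  have hlog0 : 0 < Real.log s := Real.log_pos hs1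
  have hlog1 : Real.log s < 1 := by simpa using Real.log_lt_log hs0 hse
  have hxi (k : ℕ) :
      xi (Real.exp (2 * k) * s) = ((2 : ℝ) ^ Nat.log 2 (k + 1))⁻¹ * Real.log s := by
    have h := xi_exp_two_mul_add hlog0 hlog1 k
    rwa [Real.exp_add, Real.exp_log hs0, div_eq_inv_mul] at h
  rw [fMap_iterate_ofReal hz0 hz1, Finset.sum_congr rfl fun k _ ↦ hxi k, ← Finset.sum_mul,
    sum_range_two_pow_sub_one_inv_two_pow_log, radialFlow, Complex.ofReal_mul,
    Complex.ofReal_natCast]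
end
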